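/- Let A be an n×n primitive matrix with all row sums positive. Define the sequence A^(0) = A and A^(t) = D_{r^(t-1)}⁻¹ A^(t-1) D_{r^(t-1)}, where r^(t-1) is the vector of row sums of A^(t-1). Then the sequences ξ^(t) = ρ(A) − min_i r_i(A^(t)) and ζ^(t) = max_i r_i(A^(t)) − ρ(A) are nonnegative and nonincreasing, and both converge to 0 as t → ∞; in particular every row sum of A^(t) converges to the Perron root ρ(A). -/

import Mathlib

/-!
Write `x t = A^t 1`. Inductively `A^(t) = diag(x t)⁻¹ A diag(x t)`, so the row sums of `A^(t)` are
the power-method quotients `(A x t)_i / (x t)_i`. Since `A^(t)` is nonnegative and similar to `A`,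
`ρ(A)` lies between its smallest and largest row sum (the upper bound because the ℓ∞ operator
norm is the largest row sum, the lower bound by Gelfand's formula).

The quotients at time `t + k` are averages of those at time `t`, with the row-stochastic weights
`(A^k)_ij (x t)_j / (A^k x t)_i`. For `k = 1` this makes the smallest quotient nondecreasing and
the largest nonincreasing. For `k = m` with `A^m > 0`, every weight in column `j` is at least
`(a / b) (x t)_j / ∑ (x t)`, where `a` and `b` are the smallest and largest entries of `A^m`, so the
spread max − min shrinks by the factor `1 − a / b` every `m` steps and tends to `0`.
-/

open Matrix Filter

/-- The spectral radius of a real matrix. -/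
noncomputable def specRad {n : ℕ} (A : Matrix (Fin n) (Fin n) ℝ) : ℝ :=
  sSup {r : ℝ | ∃ μ ∈ spectrum ℂ (A.map (Complex.ofReal)), r = ‖μ‖}

open Finset Topology

section SpectralRadius

variable {n : ℕ}

theorem specRad_nonneg (A : Matrix (Fin n) (Fin n) ℝ) : 0 ≤ specRad A :=
  Real.sSup_nonneg <| by rintro _ ⟨μ, -, rfl⟩; exact norm_nonneg μ

theorem specRad_inv_mul_mul {P : Matrix (Fin n) (Fin n) ℝ} (hP : IsUnit P)
    (A : Matrix (Fin n) (Fin n) ℝ) : specRad (P⁻¹ * A * P) = specRad A := by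
  obtain ⟨u, rfl⟩ := hP
  let φ : Matrix (Fin n) (Fin n) ℝ →+* Matrix (Fin n) (Fin n) ℂ := Complex.ofRealHom.mapMatrix
  let v := Units.map (φ : Matrix (Fin n) (Fin n) ℝ →* Matrix (Fin n) (Fin n) ℂ) u
  have hmap : φ ((↑u⁻¹ : Matrix (Fin n) (Fin n) ℝ) * A * u) =
      (↑v⁻¹ : Matrix (Fin n) (Fin n) ℂ) * φ A * v := by
    rw [map_mul, map_mul]; rfl
  have hspec : spectrum ℂ (φ ((↑u⁻¹ : Matrix (Fin n) (Fin n) ℝ) * A * u)) = spectrum ℂ (φ A) := by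
    rw [hmap, spectrum.units_conjugate']
  rw [← coe_units_inv, specRad, specRad]
  exact congrArg (fun S => sSup {r : ℝ | ∃ μ ∈ S, r = ‖μ‖}) hspec

attribute [local instance] Matrix.linftyOpSeminormedAddCommGroup Matrix.linftyOpNormedRing
  Matrix.linftyOpNormedAlgebra

theorem Matrix.linfty_opNorm_le_iff {m n α : Type*} [Fintype m] [Fintype n]
    [SeminormedAddCommGroup α] {A : Matrix m n α} {s : ℝ} (hs : 0 ≤ s) :
    ‖A‖ ≤ s ↔ ∀ i, ∑ j, ‖A i j‖ ≤ s := by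
  lift s to NNReal using hs
  rw [← coe_nnnorm, NNReal.coe_le_coe, linfty_opNNNorm_def, Finset.sup_le_iff]
  simp [← NNReal.coe_le_coe]

theorem Matrix.linfty_opNorm_map_ofReal {m n : Type*} [Fintype m] [Fintype n]
    (A : Matrix m n ℝ) : ‖A.map Complex.ofReal‖ = ‖A‖ := by
  simp [linfty_opNorm_def]

theorem pow_le_sum_pow_apply {ι : Type*} [Fintype ι] [DecidableEq ι] {C : Matrix ι ι ℝ}
    (hC : ∀ i j, 0 ≤ C i j) {s : ℝ} (hs : 0 ≤ s) (h : ∀ i, s ≤ ∑ j, C i j) (k : ℕ) (i : ι) :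
    s ^ k ≤ ∑ j, (C ^ k) i j := by
  induction k generalizing i with
  | zero => simp [one_apply]
  | succ k ih =>
    calc s ^ (k + 1) = s * s ^ k := pow_succ' s k
      _ ≤ (∑ l, C i l) * s ^ k := by gcongr; exact h i
      _ ≤ ∑ l, C i l * ∑ j, (C ^ k) l j := by
        rw [sum_mul]; gcongr with l; exacts [hC i l, ih l]
      _ = ∑ j, (C ^ (k + 1)) i j := by
        simp only [pow_succ', mul_apply, mul_sum]; exact sum_comm

theorem ofReal_specRad [NeZero n] (A : Matrix (Fin n) (Fin n) ℝ) :
    ENNReal.ofReal (specRad A) = spectralRadius ℂ (A.map Complex.ofReal) := by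
  obtain ⟨k, hk, hρ⟩ := spectrum.exists_nnnorm_eq_spectralRadius_of_nonempty
    (spectrum.nonempty (A.map Complex.ofReal))
  have hmax : IsGreatest {r : ℝ | ∃ μ ∈ spectrum ℂ (A.map Complex.ofReal), r = ‖μ‖} ‖k‖ := by
    refine ⟨⟨k, hk, rfl⟩, ?_⟩
    rintro _ ⟨μ, hμ, rfl⟩
    have : (‖μ‖₊ : ENNReal) ≤ ‖k‖₊ := hρ ▸ le_iSup₂ (f := fun μ _ => (‖μ‖₊ : ENNReal)) μ hμ
    exact_mod_cast this
  rw [specRad, hmax.csSup_eq, ← hρ, ofReal_norm, enorm_eq_nnnorm]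

theorem specRad_le_of_sum_le [NeZero n] {C : Matrix (Fin n) (Fin n) ℝ} (hC : ∀ i j, 0 ≤ C i j)
    {s : ℝ} (h : ∀ i, ∑ j, C i j ≤ s) : specRad C ≤ s := by
  have hs : 0 ≤ s := (sum_nonneg fun j _ => hC 0 j).trans (h 0)
  rw [← ENNReal.ofReal_le_ofReal_iff hs, ofReal_specRad]
  refine (spectrum.spectralRadius_le_nnnorm _).trans ?_
  rw [← enorm_eq_nnnorm, ← ofReal_norm, Matrix.linfty_opNorm_map_ofReal]
  refine ENNReal.ofReal_le_ofReal <| (Matrix.linfty_opNorm_le_iff hs).2 fun i => ?_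
  simpa [Real.norm_eq_abs, abs_of_nonneg (hC i _)] using h i

theorem le_specRad_of_le_sum [NeZero n] {C : Matrix (Fin n) (Fin n) ℝ} (hC : ∀ i j, 0 ≤ C i j)
    {s : ℝ} (h : ∀ i, s ≤ ∑ j, C i j) : s ≤ specRad C := by
  rcases le_or_gt s 0 with hs | hs
  · exact hs.trans (specRad_nonneg C)
  rw [← ENNReal.ofReal_le_ofReal_iff (specRad_nonneg C), ofReal_specRad]
  refine ge_of_tendsto (spectrum.pow_norm_pow_one_div_tendsto_nhds_spectralRadius _) ?_
  filter_upwards [eventually_gt_atTop 0] with k hk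
  have hpow : s ^ k ≤ ‖(C.map Complex.ofReal) ^ k‖ := by
    rw [show C.map Complex.ofReal ^ k = (C ^ k).map Complex.ofReal from
      (C.map_pow Complex.ofRealHom k).symm, Matrix.linfty_opNorm_map_ofReal]
    calc s ^ k ≤ ∑ j, (C ^ k) 0 j := pow_le_sum_pow_apply hC hs.le h k 0
      _ ≤ ∑ j, ‖(C ^ k) 0 j‖ := sum_le_sum fun j _ => Real.le_norm_self _
      _ ≤ ‖C ^ k‖ := (Matrix.linfty_opNorm_le_iff (norm_nonneg _)).1 le_rfl 0
  rw [ENNReal.ofReal_le_ofReal_iff (by positivity), one_div,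
    Real.le_rpow_inv_iff_of_pos hs.le (norm_nonneg _) (by positivity), Real.rpow_natCast]
  exact hpow

end SpectralRadius

section Stochastic

variable {ι : Type*} [Fintype ι]

theorem sum_mul_inf'_le_sum_mul (h : (univ : Finset ι).Nonempty) {w : ι → ℝ} (hw : ∀ j, 0 ≤ w j)
    (v : ι → ℝ) : (∑ j, w j) * univ.inf' h v ≤ ∑ j, w j * v j := by
  rw [sum_mul]; gcongr with j; exacts [hw j, inf'_le v (mem_univ j)]

theorem sum_mul_le_sum_mul_sup' (h : (univ : Finset ι).Nonempty) {w : ι → ℝ} (hw : ∀ j, 0 ≤ w j)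
    (v : ι → ℝ) : ∑ j, w j * v j ≤ (∑ j, w j) * univ.sup' h v := by
  rw [sum_mul]; gcongr with j; exacts [hw j, le_sup' v (mem_univ j)]

variable [DecidableEq ι] {M : Matrix ι ι ℝ}

theorem inf'_le_inf'_mulVec (h : (univ : Finset ι).Nonempty) (hM : M ∈ rowStochastic ℝ ι)
    (v : ι → ℝ) : univ.inf' h v ≤ univ.inf' h (M *ᵥ v) :=
  le_inf' h _ fun i _ => by
    have := sum_mul_inf'_le_sum_mul h (fun j => hM.1 i j) v
    rwa [sum_row_of_mem_rowStochastic hM, one_mul] at this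

theorem sup'_mulVec_le_sup' (h : (univ : Finset ι).Nonempty) (hM : M ∈ rowStochastic ℝ ι)
    (v : ι → ℝ) : univ.sup' h (M *ᵥ v) ≤ univ.sup' h v :=
  sup'_le h _ fun i _ => by
    have := sum_mul_le_sum_mul_sup' h (fun j => hM.1 i j) v
    rwa [sum_row_of_mem_rowStochastic hM, one_mul] at this

theorem sup'_sub_inf'_mulVec_le (h : (univ : Finset ι).Nonempty) (hM : M ∈ rowStochastic ℝ ι)
    {δ : ι → ℝ} (hδ : ∀ i j, δ j ≤ M i j) (v : ι → ℝ) :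
    univ.sup' h (M *ᵥ v) - univ.inf' h (M *ᵥ v) ≤
      (1 - ∑ j, δ j) * (univ.sup' h v - univ.inf' h v) := by
  -- the part `δ` common to all rows cancels in `(M *ᵥ v) p - (M *ᵥ v) q`
  have hsplit : ∀ i, (M *ᵥ v) i = ∑ j, (M i j - δ j) * v j + ∑ j, δ j * v j := fun i => by
    simp only [mulVec, dotProduct, ← sum_add_distrib, sub_mul, sub_add_cancel]
  have hmass : ∀ i, ∑ j, (M i j - δ j) = 1 - ∑ j, δ j := fun i => by
    rw [sum_sub_distrib, sum_row_of_mem_rowStochastic hM]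
  obtain ⟨p, -, hp⟩ := univ.exists_mem_eq_sup' h (M *ᵥ v)
  obtain ⟨q, -, hq⟩ := univ.exists_mem_eq_inf' h (M *ᵥ v)
  have hup := sum_mul_le_sum_mul_sup' h (fun j => sub_nonneg.2 (hδ p j)) v
  have hlow := sum_mul_inf'_le_sum_mul h (fun j => sub_nonneg.2 (hδ q j)) v
  rw [hmass] at hup hlow
  rw [hp, hq, hsplit p, hsplit q, mul_sub]
  linarith

end Stochastic

section DiagonalConjugation

variable {ι : Type*} [Fintype ι] [DecidableEq ι]

theorem inv_diagonal_of_ne_zero {K : Type*} [Field K] {y : ι → K} (hy : ∀ i, y i ≠ 0) :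
    (diagonal y)⁻¹ = diagonal y⁻¹ :=
  inv_eq_left_inv <| by
    rw [diagonal_mul_diagonal, ← diagonal_one]
    exact congrArg diagonal (funext fun i => inv_mul_cancel₀ (hy i))

theorem inv_diagonal_mul_mul_diagonal_apply {y : ι → ℝ} (hy : ∀ i, y i ≠ 0) (P : Matrix ι ι ℝ)
    (x : ι → ℝ) (i j : ι) : ((diagonal y)⁻¹ * P * diagonal x) i j = P i j * x j / y i := by
  rw [inv_diagonal_of_ne_zero hy, mul_diagonal, diagonal_mul, Pi.inv_apply]
  ring

theorem sum_inv_diagonal_mul_mul_diagonal_apply {y : ι → ℝ} (hy : ∀ i, y i ≠ 0)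
    (P : Matrix ι ι ℝ) (x : ι → ℝ) (i : ι) :
    ∑ j, ((diagonal y)⁻¹ * P * diagonal x) i j = (P *ᵥ x) i / y i := by
  simp_rw [inv_diagonal_mul_mul_diagonal_apply hy, ← sum_div]
  rfl

end DiagonalConjugation

theorem inf'_mulVec_div_le_specRad {n : ℕ} [NeZero n] (h : (univ : Finset (Fin n)).Nonempty)
    {A : Matrix (Fin n) (Fin n) ℝ} (hA : ∀ i j, 0 ≤ A i j) {x : Fin n → ℝ} (hx : ∀ i, 0 < x i) :
    univ.inf' h ((A *ᵥ x) / x) ≤ specRad A := by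
  have hx' : ∀ i, x i ≠ 0 := fun i => (hx i).ne'
  rw [← specRad_inv_mul_mul (isUnit_diagonal.2 (Pi.isUnit_iff.2 fun i => (hx' i).isUnit)) A]
  refine le_specRad_of_le_sum (fun i j => ?_) fun i => ?_
  · rw [inv_diagonal_mul_mul_diagonal_apply hx']
    exact div_nonneg (mul_nonneg (hA i j) (hx j).le) (hx i).le
  · rw [sum_inv_diagonal_mul_mul_diagonal_apply hx']
    exact inf'_le _ (mem_univ i)

theorem specRad_le_sup'_mulVec_div {n : ℕ} [NeZero n] (h : (univ : Finset (Fin n)).Nonempty)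
    {A : Matrix (Fin n) (Fin n) ℝ} (hA : ∀ i j, 0 ≤ A i j) {x : Fin n → ℝ} (hx : ∀ i, 0 < x i) :
    specRad A ≤ univ.sup' h ((A *ᵥ x) / x) := by
  have hx' : ∀ i, x i ≠ 0 := fun i => (hx i).ne'
  rw [← specRad_inv_mul_mul (isUnit_diagonal.2 (Pi.isUnit_iff.2 fun i => (hx' i).isUnit)) A]
  refine specRad_le_of_sum_le (fun i j => ?_) fun i => ?_
  · rw [inv_diagonal_mul_mul_diagonal_apply hx']
    exact div_nonneg (mul_nonneg (hA i j) (hx j).le) (hx i).le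
  · rw [sum_inv_diagonal_mul_mul_diagonal_apply hx']
    exact le_sup' ((A *ᵥ x) / x) (mem_univ i)

section DoobTransform

variable {ι : Type*} [Fintype ι] [DecidableEq ι] {P : Matrix ι ι ℝ} {x : ι → ℝ}

-- Doob's `h`-transform of `P` when `x` is a positive eigenvector of `P`.
noncomputable def doobTransform (P : Matrix ι ι ℝ) (x : ι → ℝ) : Matrix ι ι ℝ :=
  (diagonal (P *ᵥ x))⁻¹ * P * diagonal x

theorem doobTransform_mem_rowStochastic (hP : ∀ i j, 0 ≤ P i j) (hx : ∀ j, 0 ≤ x j)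
    (hPx : ∀ i, 0 < (P *ᵥ x) i) : doobTransform P x ∈ rowStochastic ℝ ι := by
  have hPx' : ∀ i, (P *ᵥ x) i ≠ 0 := fun i => (hPx i).ne'
  refine mem_rowStochastic_iff_sum.2 ⟨fun i j => ?_, fun i => ?_⟩
  · rw [doobTransform, inv_diagonal_mul_mul_diagonal_apply hPx']
    exact div_nonneg (mul_nonneg (hP i j) (hx j)) (hPx i).le
  · rw [doobTransform, sum_inv_diagonal_mul_mul_diagonal_apply hPx', div_self (hPx' i)]

theorem mulVec_div_mulVec_eq_doobTransform_mulVec {A : Matrix ι ι ℝ} (hAP : Commute A P)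
    (hx : ∀ j, x j ≠ 0) (hPx : ∀ i, (P *ᵥ x) i ≠ 0) :
    (A *ᵥ (P *ᵥ x)) / (P *ᵥ x) = doobTransform P x *ᵥ ((A *ᵥ x) / x) := by
  ext i
  rw [Pi.div_apply, mulVec_mulVec, hAP.eq, ← mulVec_mulVec]
  change (∑ j, P i j * (A *ᵥ x) j) / (P *ᵥ x) i = ∑ j, doobTransform P x i j * ((A *ᵥ x) j / x j)
  rw [sum_div]
  refine sum_congr rfl fun j _ => ?_
  rw [doobTransform, inv_diagonal_mul_mul_diagonal_apply hPx]
  field_simp [hx j]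

theorem le_doobTransform_apply {a b : ℝ} (ha : 0 < a) (haP : ∀ i j, a ≤ P i j)
    (hPb : ∀ i j, P i j ≤ b) (hx : ∀ j, 0 < x j) (i j : ι) :
    a / b * (x j / ∑ k, x k) ≤ doobTransform P x i j := by
  have hPx : ∀ i, 0 < (P *ᵥ x) i := fun i =>
    sum_pos (fun k _ => mul_pos (ha.trans_le (haP i k)) (hx k)) ⟨j, mem_univ j⟩
  have hPx_le : (P *ᵥ x) i ≤ b * ∑ k, x k := by
    rw [mul_sum]; exact sum_le_sum fun k _ => mul_le_mul_of_nonneg_right (hPb i k) (hx k).le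
  rw [doobTransform, inv_diagonal_mul_mul_diagonal_apply fun i => (hPx i).ne', div_mul_div_comm]
  exact div_le_div₀ (mul_nonneg (ha.trans_le (haP i j)).le (hx j).le)
    (mul_le_mul_of_nonneg_right (haP i j) (hx j).le) (hPx i) hPx_le

end DoobTransform

theorem tendsto_zero_of_antitone_of_le_mul {g : ℕ → ℝ} (hg0 : ∀ t, 0 ≤ g t) (hg : Antitone g)
    {c : ℝ} (hc : c < 1) (m : ℕ) (hgm : ∀ t, g (t + m) ≤ c * g t) : Tendsto g atTop (𝓝 0) := by
  have hL : Tendsto g atTop (𝓝 (⨅ t, g t)) :=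
    tendsto_atTop_ciInf hg ⟨0, by rintro _ ⟨t, rfl⟩; exact hg0 t⟩
  have hL0 : 0 ≤ ⨅ t, g t := ge_of_tendsto' hL hg0
  have hLc : ⨅ t, g t ≤ c * ⨅ t, g t :=
    le_of_tendsto_of_tendsto' (hL.comp (tendsto_add_atTop_nat m)) (hL.const_mul c) hgm
  have hL_eq : ⨅ t, g t = 0 := by nlinarith
  rwa [hL_eq] at hL

section PowerRatio

variable {ι : Type*} [Fintype ι] {A : Matrix ι ι ℝ}

theorem mulVec_pos_of_sum_pos (hA : ∀ i j, 0 ≤ A i j) (hrow : ∀ i, 0 < ∑ j, A i j) {v : ι → ℝ}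
    (hv : ∀ j, 0 < v j) (i : ι) : 0 < (A *ᵥ v) i := by
  obtain ⟨j, -, hj⟩ := exists_lt_of_sum_lt (by simpa using hrow i : ∑ _j : ι, (0 : ℝ) < ∑ j, A i j)
  exact sum_pos' (fun k _ => mul_nonneg (hA i k) (hv k).le) ⟨j, mem_univ j, mul_pos hj (hv j)⟩

variable [DecidableEq ι]

noncomputable def powerRatio (A : Matrix ι ι ℝ) (t : ℕ) : ι → ℝ :=
  (A *ᵥ (A ^ t *ᵥ 1)) / (A ^ t *ᵥ 1)

theorem pow_mulVec_one_pos (hA : ∀ i j, 0 ≤ A i j) (hrow : ∀ i, 0 < ∑ j, A i j) (t : ℕ)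
    (i : ι) : 0 < (A ^ t *ᵥ 1) i := by
  induction t generalizing i with
  | zero => simp
  | succ t ih => rw [pow_succ', ← mulVec_mulVec]; exact mulVec_pos_of_sum_pos hA hrow ih i

theorem powerRatio_add (hA : ∀ i j, 0 ≤ A i j) (hrow : ∀ i, 0 < ∑ j, A i j) (t k : ℕ) :
    powerRatio A (t + k) = doobTransform (A ^ k) (A ^ t *ᵥ 1) *ᵥ powerRatio A t := by
  have hx := pow_mulVec_one_pos hA hrow
  rw [powerRatio, add_comm, pow_add, ← mulVec_mulVec]
  refine mulVec_div_mulVec_eq_doobTransform_mulVec (Commute.self_pow A k) (fun j => (hx t j).ne')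
    fun i => ?_
  rw [mulVec_mulVec, ← pow_add]
  exact (hx _ i).ne'

theorem doobTransform_pow_mem_rowStochastic (hA : ∀ i j, 0 ≤ A i j)
    (hrow : ∀ i, 0 < ∑ j, A i j) (t k : ℕ) :
    doobTransform (A ^ k) (A ^ t *ᵥ 1) ∈ rowStochastic ℝ ι := by
  refine doobTransform_mem_rowStochastic (pow_apply_nonneg hA k)
    (fun j => (pow_mulVec_one_pos hA hrow t j).le) fun i => ?_
  rw [mulVec_mulVec, ← pow_add]
  exact pow_mulVec_one_pos hA hrow _ i

theorem monotone_inf'_powerRatio (h : (univ : Finset ι).Nonempty) (hA : ∀ i j, 0 ≤ A i j)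
    (hrow : ∀ i, 0 < ∑ j, A i j) : Monotone fun t => univ.inf' h (powerRatio A t) :=
  monotone_nat_of_le_succ fun t => by
    simpa only [powerRatio_add hA hrow] using
      inf'_le_inf'_mulVec h (doobTransform_pow_mem_rowStochastic hA hrow t 1) _

theorem antitone_sup'_powerRatio (h : (univ : Finset ι).Nonempty) (hA : ∀ i j, 0 ≤ A i j)
    (hrow : ∀ i, 0 < ∑ j, A i j) : Antitone fun t => univ.sup' h (powerRatio A t) :=
  antitone_nat_of_succ_le fun t => by
    simpa only [powerRatio_add hA hrow] using
      sup'_mulVec_le_sup' h (doobTransform_pow_mem_rowStochastic hA hrow t 1) _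

theorem sup'_sub_inf'_powerRatio_add_le (h : (univ : Finset ι).Nonempty)
    (hA : ∀ i j, 0 ≤ A i j) (hrow : ∀ i, 0 < ∑ j, A i j) {m : ℕ} {a b : ℝ} (ha : 0 < a)
    (haA : ∀ i j, a ≤ (A ^ m) i j) (hAb : ∀ i j, (A ^ m) i j ≤ b) (t : ℕ) :
    univ.sup' h (powerRatio A (t + m)) - univ.inf' h (powerRatio A (t + m)) ≤
      (1 - a / b) * (univ.sup' h (powerRatio A t) - univ.inf' h (powerRatio A t)) := by
  set x := A ^ t *ᵥ 1
  have hx : ∀ j, 0 < x j := pow_mulVec_one_pos hA hrow t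
  have hδ : ∑ j, a / b * (x j / ∑ k, x k) = a / b := by
    rw [← mul_sum, ← sum_div, div_self (sum_pos (fun j _ => hx j) h).ne', mul_one]
  rw [powerRatio_add hA hrow, ← hδ]
  exact sup'_sub_inf'_mulVec_le h (doobTransform_pow_mem_rowStochastic hA hrow t m)
    (le_doobTransform_apply ha haA hAb hx) _

theorem tendsto_sup'_sub_inf'_powerRatio (h : (univ : Finset ι).Nonempty)
    (hA : ∀ i j, 0 ≤ A i j) (hrow : ∀ i, 0 < ∑ j, A i j) {m : ℕ}
    (hAm : ∀ i j, 0 < (A ^ m) i j) :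
    Tendsto (fun t => univ.sup' h (powerRatio A t) - univ.inf' h (powerRatio A t)) atTop (𝓝 0) := by
  have : Nonempty ι := univ_nonempty_iff.1 h
  obtain ⟨⟨i₀, j₀⟩, hmin⟩ := Finite.exists_min fun p : ι × ι => (A ^ m) p.1 p.2
  obtain ⟨⟨i₁, j₁⟩, hmax⟩ := Finite.exists_max fun p : ι × ι => (A ^ m) p.1 p.2
  have hratio : 0 < (A ^ m) i₀ j₀ / (A ^ m) i₁ j₁ := div_pos (hAm i₀ j₀) (hAm i₁ j₁)
  refine tendsto_zero_of_antitone_of_le_mul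
    (fun t => sub_nonneg.2 ((inf'_le _ (mem_univ i₀)).trans (le_sup' _ (mem_univ i₀))))
    (fun s t hst => sub_le_sub (antitone_sup'_powerRatio h hA hrow hst)
      (monotone_inf'_powerRatio h hA hrow hst))
    (sub_lt_self 1 hratio) m ?_
  exact sup'_sub_inf'_powerRatio_add_le h hA hrow (hAm i₀ j₀) (fun i j => hmin (i, j))
    (fun i j => hmax (i, j))

theorem rowSum_iterate_eq_powerRatio (hA : ∀ i j, 0 ≤ A i j) (hrow : ∀ i, 0 < ∑ j, A i j)
    {B : ℕ → Matrix ι ι ℝ} {r : ℕ → ι → ℝ} (hr : ∀ t i, r t i = ∑ j, B t i j) (hB0 : B 0 = A)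
    (hBt : ∀ t, B (t + 1) = (diagonal (r t))⁻¹ * B t * diagonal (r t)) (t : ℕ) :
    r t = powerRatio A t := by
  have hx : ∀ t i, (A ^ t *ᵥ 1) i ≠ 0 := fun t i => (pow_mulVec_one_pos hA hrow t i).ne'
  have hr_of_conj : ∀ t, B t = (diagonal (A ^ t *ᵥ 1))⁻¹ * A * diagonal (A ^ t *ᵥ 1) →
      r t = powerRatio A t := fun t hBt' => funext fun i => by
    rw [hr, hBt', sum_inv_diagonal_mul_mul_diagonal_apply (hx t)]
    rfl
  have hconj : ∀ t, B t = (diagonal (A ^ t *ᵥ 1))⁻¹ * A * diagonal (A ^ t *ᵥ 1) := by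
    intro t
    induction t with
    | zero => simp [hB0]
    | succ t ih =>
      have hnext : diagonal (A ^ (t + 1) *ᵥ 1) = diagonal (A ^ t *ᵥ 1) * diagonal (r t) := by
        rw [diagonal_mul_diagonal, hr_of_conj t ih]
        refine congrArg diagonal (funext fun i => ?_)
        rw [powerRatio, Pi.div_apply, mul_div_cancel₀ _ (hx t i), pow_succ', ← mulVec_mulVec]
      rw [hBt, ih, hnext, Matrix.mul_inv_rev]
      simp only [Matrix.mul_assoc]
  exact hr_of_conj t (hconj t)

end PowerRatio

/-- Convergence of the iterative algorithm: for a primitive matrix with positive row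
sums, the sequences `ξ^(t) = ρ(A) − min_i r_i(A^(t))` and
`ζ^(t) = max_i r_i(A^(t)) − ρ(A)` are nonnegative, nonincreasing, and tend to `0`;
every row sum of `A^(t)` tends to the Perron root. -/
theorem row_sum_iteration_converges {n : ℕ} (hn : 0 < n)
    (A : Matrix (Fin n) (Fin n) ℝ) (hA : ∀ i j, 0 ≤ A i j)
    (hprim : ∃ m : ℕ, 0 < m ∧ ∀ i j, 0 < (A ^ m) i j)
    (hrowpos : ∀ i, 0 < ∑ j, A i j)
    (B : ℕ → Matrix (Fin n) (Fin n) ℝ)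
    (r : ℕ → Fin n → ℝ) (hr : ∀ t i, r t i = ∑ j, B t i j)
    (hB0 : B 0 = A)
    (hBt : ∀ t, B (t + 1) = (Matrix.diagonal (r t))⁻¹ * B t * Matrix.diagonal (r t)) :
    let ne : (Finset.univ : Finset (Fin n)).Nonempty := Finset.univ_nonempty_iff.mpr ⟨⟨0, hn⟩⟩
    let ξ : ℕ → ℝ := fun t => specRad A - Finset.univ.inf' ne (r t)
    let ζ : ℕ → ℝ := fun t => Finset.univ.sup' ne (r t) - specRad A
    (∀ t, 0 ≤ ξ t) ∧ (∀ t, 0 ≤ ζ t) ∧ Antitone ξ ∧ Antitone ζ ∧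
    Tendsto ξ atTop (nhds 0) ∧ Tendsto ζ atTop (nhds 0) ∧
    ∀ i, Tendsto (fun t => r t i) atTop (nhds (specRad A)) := by
  intro ne ξ ζ
  have : NeZero n := ⟨hn.ne'⟩
  obtain ⟨m, -, hAm⟩ := hprim
  obtain rfl : r = powerRatio A := funext (rowSum_iterate_eq_powerRatio hA hrowpos hr hB0 hBt)
  have hx := pow_mulVec_one_pos hA hrowpos
  have hξ0 : ∀ t, 0 ≤ ξ t := fun t => sub_nonneg.2 (inf'_mulVec_div_le_specRad ne hA (hx t))
  have hζ0 : ∀ t, 0 ≤ ζ t := fun t => sub_nonneg.2 (specRad_le_sup'_mulVec_div ne hA (hx t))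
  have hgap := tendsto_sup'_sub_inf'_powerRatio ne hA hrowpos hAm
  have hξ : Tendsto ξ atTop (𝓝 0) := squeeze_zero hξ0 (fun t => by linarith [hζ0 t]) hgap
  have hζ : Tendsto ζ atTop (𝓝 0) := squeeze_zero hζ0 (fun t => by linarith [hξ0 t]) hgap
  refine ⟨hξ0, hζ0, fun s t hst => sub_le_sub_left (monotone_inf'_powerRatio ne hA hrowpos hst) _,
    fun s t hst => sub_le_sub_right (antitone_sup'_powerRatio ne hA hrowpos hst) _, hξ, hζ,
    fun i => ?_⟩
  refine tendsto_of_tendsto_of_tendsto_of_le_of_le (g := fun t => specRad A - ξ t)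
    (h := fun t => specRad A + ζ t) (by simpa using tendsto_const_nhds.sub hξ)
    (by simpa using tendsto_const_nhds.add hζ) (fun t => ?_) (fun t => ?_)
  · dsimp only [ξ]; rw [sub_sub_cancel]; exact inf'_le _ (mem_univ i)
  · dsimp only [ζ]; rw [add_sub_cancel]; exact le_sup' _ (mem_univ i)
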